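/- arXiv:1006.0326 — 5 statements merged into one kernel-verified Lean document; each statement's English description precedes it below -/
import Mathlib

section
/- For all nonnegative integers n and m, the sum over j ≥ 0 with j ≠ n and j ≠ m of 1/(⟨j-n⟩² ⟨j-m⟩) is at most K/⟨m-n⟩, where K = 3 + 2ζ(2) and ⟨a⟩ := max(1, |a|). -/
/-!
Put `a = |j - n|`, `b = |j - m|` and `D = ⟨m - n⟩`, so that `D ≤ a + b`. If `b ≥ D` the term
`1 / (a² b)` is at most `1 / (D a²)`. If `b < D`, then `a ≥ D - b` and
`1 / (a² b) ≤ (a + b) / (D a² b) = (1 / a² + 1 / (a b)) / D ≤ (1 / a² + 1 / (b (D - b))) / D`.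
Summing, `∑ 1 / a² ≤ 2 ζ(2)`, while each `b ∈ (0, D)` occurs for at most two `j` and
`b (D - b) ≥ D - 1`, so the second part contributes at most `2 / D`.
-/

open Real

noncomputable def jap (a : ℤ) : ℝ := max 1 |(a : ℝ)|

lemma jap_eq_natCast (a : ℤ) : jap a = ((max 1 a.natAbs : ℕ) : ℝ) := by
  rw [jap, Nat.cast_max, Nat.cast_one, Nat.cast_natAbs, Int.cast_abs]

lemma one_le_jap (a : ℤ) : 1 ≤ jap a := le_max_left _ _

noncomputable def nearWeight (D b : ℕ) : ℝ :=
  if 0 < b ∧ b < D then 1 / ((b * (D - b) : ℕ) : ℝ) else 0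

lemma nearWeight_nonneg (D b : ℕ) : 0 ≤ nearWeight D b := by
  unfold nearWeight; split_ifs <;> positivity

lemma nearWeight_le (D b : ℕ) : nearWeight D b ≤ 1 / ((D - 1 : ℕ) : ℝ) := by
  unfold nearWeight
  split_ifs with hb
  · obtain ⟨hb0, hbD⟩ := hb
    have hprod : D - 1 ≤ b * (D - b) := by
      obtain ⟨c, rfl⟩ := Nat.exists_eq_add_of_lt hbD
      rw [Nat.add_sub_cancel, show b + c + 1 - b = c + 1 by omega]
      nlinarith
    exact one_div_le_one_div_of_le (by exact_mod_cast (by omega : 0 < D - 1))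
      (by exact_mod_cast hprod)
  · positivity

lemma sum_nearWeight_le_one (D : ℕ) (t : Finset ℕ) : ∑ b ∈ t, nearWeight D b ≤ 1 := by
  classical
  have hsupp : ∀ b ∈ t, b ∉ t ∩ Finset.Ioo 0 D → nearWeight D b = 0 := by
    intro b _ hb
    simp only [Finset.mem_inter, Finset.mem_Ioo, not_and] at hb
    rw [nearWeight, if_neg (by tauto)]
  calc ∑ b ∈ t, nearWeight D b = ∑ b ∈ t ∩ Finset.Ioo 0 D, nearWeight D b :=
        (Finset.sum_subset Finset.inter_subset_left hsupp).symm
    _ ≤ ∑ _b ∈ Finset.Ioo 0 D, 1 / ((D - 1 : ℕ) : ℝ) :=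
        Finset.sum_le_sum_of_subset_of_nonneg Finset.inter_subset_right
          (fun b _ _ => nearWeight_nonneg D b) |>.trans
          (Finset.sum_le_sum fun b _ => nearWeight_le D b)
    _ = ((D - 1 : ℕ) : ℝ) * (1 / ((D - 1 : ℕ) : ℝ)) := by
        rw [Finset.sum_const, Nat.card_Ioo, Nat.sub_zero, nsmul_eq_mul]
    _ ≤ 1 := by
        rw [mul_one_div]
        exact div_self_le_one _

lemma one_div_sq_mul_le {a b D : ℕ} (ha : 0 < a) (hb : 0 < b) (hD : 0 < D) (hab : D ≤ a + b) :
    1 / ((a : ℝ) ^ 2 * b) ≤ (1 / (a : ℝ) ^ 2 + nearWeight D b) / D := by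
  have haR : (0 : ℝ) < a := by exact_mod_cast ha
  have hbR : (0 : ℝ) < b := by exact_mod_cast hb
  have hDR : (0 : ℝ) < D := by exact_mod_cast hD
  unfold nearWeight
  split_ifs with hnear
  · have hDb : ((D - b : ℕ) : ℝ) = D - b := Nat.cast_sub hnear.2.le
    have hDbR : (0 : ℝ) < D - b := by rw [← hDb]; exact_mod_cast Nat.sub_pos_of_lt hnear.2
    have habR : (D : ℝ) ≤ a + b := by exact_mod_cast hab
    rw [Nat.cast_mul, hDb, le_div_iff₀ hDR]
    calc 1 / ((a : ℝ) ^ 2 * b) * D ≤ 1 / ((a : ℝ) ^ 2 * b) * (a + b) := by gcongr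
      _ = 1 / (a : ℝ) ^ 2 + 1 / ((a : ℝ) * b) := by field_simp; ring
      _ ≤ 1 / (a : ℝ) ^ 2 + 1 / ((b : ℝ) * (D - b)) := by
          gcongr 1 / _ + ?_
          exact one_div_le_one_div_of_le (by positivity) (by nlinarith)
  · have hDb : (D : ℝ) ≤ b := by exact_mod_cast not_lt.mp fun h => hnear ⟨hb, h⟩
    rw [add_zero, div_div]
    gcongr 1 / ?_
    exact mul_le_mul_of_nonneg_left hDb (by positivity)

lemma sum_comp_natAbs_sub_le {g : ℕ → ℝ} {B : ℝ} (hg : ∀ b, 0 ≤ g b)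
    (hB : ∀ t : Finset ℕ, ∑ b ∈ t, g b ≤ B) (s : Finset ℤ) (c : ℤ) :
    ∑ k ∈ s, g (k - c).natAbs ≤ 2 * B := by
  classical
  have hfiber : ∀ b : ℕ, {k ∈ s | (k - c).natAbs = b}.card ≤ 2 := by
    intro b
    refine (Finset.card_le_card (t := {c + b, c - b}) fun k hk => ?_).trans Finset.card_le_two
    simp only [Finset.mem_filter] at hk
    simp only [Finset.mem_insert, Finset.mem_singleton]
    omega
  rw [Finset.sum_comp]
  calc ∑ b ∈ s.image (fun k => (k - c).natAbs), {k ∈ s | (k - c).natAbs = b}.card • g b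
      ≤ ∑ b ∈ s.image (fun k => (k - c).natAbs), 2 * g b := by
        refine Finset.sum_le_sum fun b _ => ?_
        rw [nsmul_eq_mul]
        gcongr
        · exact hg b
        · exact_mod_cast hfiber b
    _ ≤ 2 * B := by
        rw [← Finset.mul_sum]
        exact mul_le_mul_of_nonneg_left (hB _) zero_le_two

lemma sum_one_div_jap_sq_mul_jap_le (d : ℤ) (s : Finset ℤ) (hs0 : 0 ∉ s) (hsd : d ∉ s) :
    ∑ k ∈ s, 1 / (jap k ^ 2 * jap (k - d)) ≤ (π ^ 2 / 3 + 2) / jap d := by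
  have hterm : ∀ k ∈ s, 1 / (jap k ^ 2 * jap (k - d))
      ≤ (1 / (k.natAbs : ℝ) ^ 2 + nearWeight (max 1 d.natAbs) (k - d).natAbs) / jap d := by
    intro k hk
    have hk0 : k ≠ 0 := ne_of_mem_of_not_mem hk hs0
    have hkd : k ≠ d := ne_of_mem_of_not_mem hk hsd
    rw [jap_eq_natCast k, jap_eq_natCast (k - d), jap_eq_natCast d,
      max_eq_right (by omega), max_eq_right (by omega)]
    exact one_div_sq_mul_le (by omega) (by omega) (by omega) (by omega)
  have hzeta : ∀ t : Finset ℕ, ∑ b ∈ t, 1 / (b : ℝ) ^ 2 ≤ π ^ 2 / 6 :=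
    fun t => sum_le_hasSum t (fun b _ => by positivity) hasSum_zeta_two
  calc ∑ k ∈ s, 1 / (jap k ^ 2 * jap (k - d))
      ≤ (∑ k ∈ s, 1 / (k.natAbs : ℝ) ^ 2
          + ∑ k ∈ s, nearWeight (max 1 d.natAbs) (k - d).natAbs) / jap d := by
        rw [← Finset.sum_add_distrib, Finset.sum_div]
        exact Finset.sum_le_sum hterm
    _ ≤ (2 * (π ^ 2 / 6) + 2 * 1) / jap d := by
        gcongr
        · exact le_trans zero_le_one (one_le_jap d)
        · simpa using sum_comp_natAbs_sub_le (fun b => by positivity) hzeta s 0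
        · exact sum_comp_natAbs_sub_le (nearWeight_nonneg _) (sum_nearWeight_le_one _) s d
    _ = (π ^ 2 / 3 + 2) / jap d := by ring

/-- For all `n m : ℕ`, the sum over `j ≥ 0`, `j ≠ n`, `j ≠ m` of
`1/(⟨j-n⟩² ⟨j-m⟩)` is at most `K/⟨m-n⟩` with `K = 3 + 2ζ(2) = 3 + 2·π²/6`. -/
theorem sum_convolution_bound (n m : ℕ) :
    (∑' j : {j : ℕ // j ≠ n ∧ j ≠ m},
        1 / (jap ((j : ℕ) - (n : ℤ)) ^ 2 * jap ((j : ℕ) - (m : ℤ))))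
      ≤ (3 + 2 * (π ^ 2 / 6)) / jap ((m : ℤ) - (n : ℤ)) := by
  classical
  have hjap := one_le_jap ((m : ℤ) - n)
  refine tsum_le_of_sum_le' (by positivity) fun s => ?_
  set shift : {j : ℕ // j ≠ n ∧ j ≠ m} → ℤ := fun j => (j : ℕ) - (n : ℤ)
  have hshift : Set.InjOn shift s := fun x _ y _ hxy => Subtype.ext (by simpa [shift] using hxy)
  calc ∑ j ∈ s, 1 / (jap ((j : ℕ) - (n : ℤ)) ^ 2 * jap ((j : ℕ) - (m : ℤ)))
      = ∑ k ∈ s.image shift, 1 / (jap k ^ 2 * jap (k - (m - n))) := by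
        rw [Finset.sum_image hshift]
        simp only [shift, sub_sub_sub_cancel_right]
    _ ≤ (π ^ 2 / 3 + 2) / jap ((m : ℤ) - n) := by
        refine sum_one_div_jap_sq_mul_jap_le _ _ ?_ ?_ <;> intro hmem <;>
          obtain ⟨⟨j, hjn, hjm⟩, -, hj⟩ := Finset.mem_image.mp hmem <;>
          simp only [shift] at hj <;> omega
    _ ≤ (3 + 2 * (π ^ 2 / 6)) / jap ((m : ℤ) - n) :=
        div_le_div_of_nonneg_right (by linarith) (by positivity)
end

section
/- For all integers m, n ≥ 1, the quantity a_{m,n} := (m+n)!/(2^{m+n} n! m!) satisfies a_{m,n} ≤ c · (m+n)/√((m+n)² − (m−n)²) · exp(−(m−n)²/(2(m+n))) for some absolute constant c > 0. -/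
/-!
Put `N = m + n`, `p = 2m/N`, `q = 2n/N`. Since `p + q = 2`, the `m`-th term of the binomial
expansion of `(p + q)^N` gives `C(N, m) p^m q^n ≤ 2^N`, i.e. `a_{m,n} ≤ exp (-(m log p + n log q))`.
The entropy inequality `(1 + t) log (1 + t) + (1 - t) log (1 - t) ≥ t²` (both sides are even, and
the derivative of their difference, `log (1 + t) - log (1 - t) - 2t`, is nonnegative for `t ≥ 0`
by the power series of `artanh`) at `t = (m - n)/N` gives
`m log p + n log q ≥ (m - n)²/(2N)`. The prefactor `(m + n)/√(4mn)` is at least `1` by AM-GM,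
so `c = 1` works.
-/

open Real

theorem two_mul_le_log_one_add_sub_log_one_sub {t : ℝ} (h0 : 0 ≤ t) (h1 : t < 1) :
    2 * t ≤ log (1 + t) - log (1 - t) := by
  have hs := hasSum_log_sub_log_of_abs_lt_one (abs_lt.2 ⟨by linarith, h1⟩)
  simpa using le_hasSum hs 0 fun k _ ↦ by positivity

theorem sq_le_mul_log_one_add_add_mul_log_one_sub {t : ℝ} (ht : |t| < 1) :
    t ^ 2 ≤ (1 + t) * log (1 + t) + (1 - t) * log (1 - t) := by
  set F : ℝ → ℝ := fun u ↦ (1 + u) * log (1 + u) + (1 - u) * log (1 - u) - u ^ 2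
  have hF : MonotoneOn F (Set.Ico 0 1) := by
    refine monotoneOn_of_hasDerivWithinAt_nonneg (convex_Ico 0 1)
      (f' := fun u ↦ log (1 + u) - log (1 - u) - 2 * u) ?_ (fun u hu ↦ ?_) (fun u hu ↦ ?_)
    · have h1 : Continuous fun u : ℝ ↦ (1 + u) * log (1 + u) :=
        (continuous_const.add continuous_id).mul_log
      have h2 : Continuous fun u : ℝ ↦ (1 - u) * log (1 - u) :=
        (continuous_const.sub continuous_id).mul_log
      exact ((h1.add h2).sub (continuous_pow 2)).continuousOn
    · rw [interior_Ico] at hu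
      have d1 := (hasDerivAt_mul_log (by linarith [hu.1] : (1 + u) ≠ 0)).comp u
        ((hasDerivAt_id u).const_add 1)
      have d2 := (hasDerivAt_mul_log (by linarith [hu.2] : (1 - u) ≠ 0)).comp u
        ((hasDerivAt_id u).const_sub 1)
      refine (((d1.add d2).sub (hasDerivAt_pow 2 u)).congr_deriv ?_).hasDerivWithinAt
      norm_num
      ring
    · rw [interior_Ico] at hu
      linarith [two_mul_le_log_one_add_sub_log_one_sub hu.1.le hu.2]
  have hF0 : ∀ {u : ℝ}, 0 ≤ u → u < 1 → 0 ≤ F u := fun h0 h1 ↦ by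
    simpa [F] using hF ⟨le_rfl, zero_lt_one⟩ ⟨h0, h1⟩ h0
  rcases abs_lt.1 ht with ⟨hlo, hhi⟩
  rcases le_total 0 t with h | h
  · linarith [hF0 h hhi]
  · have := hF0 (neg_nonneg.2 h) (by linarith)
    simp only [F, sub_neg_eq_add, neg_sq, ← sub_eq_add_neg] at this
    linarith

theorem sq_sub_div_le_mul_log_add_mul_log {a b : ℝ} (ha : 0 < a) (hb : 0 < b) :
    (a - b) ^ 2 / (2 * (a + b)) ≤ a * log (2 * a / (a + b)) + b * log (2 * b / (a + b)) := by
  have hs : 0 < a + b := by linarith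
  have ht : |(a - b) / (a + b)| < 1 := by
    rw [abs_div, abs_of_pos hs, div_lt_one hs, abs_lt]; constructor <;> linarith
  have key := mul_le_mul_of_nonneg_left (sq_le_mul_log_one_add_add_mul_log_one_sub ht)
    (by positivity : 0 ≤ (a + b) / 2)
  rw [show 1 + (a - b) / (a + b) = 2 * a / (a + b) by field_simp; ring,
    show 1 - (a - b) / (a + b) = 2 * b / (a + b) by field_simp; ring] at key
  have hs' := hs.ne'
  generalize log (2 * a / (a + b)) = L, log (2 * b / (a + b)) = M at key ⊢
  calc (a - b) ^ 2 / (2 * (a + b)) = (a + b) / 2 * ((a - b) / (a + b)) ^ 2 := by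
        field_simp
    _ ≤ _ := key
    _ = a * L + b * M := by
        field_simp

theorem choose_mul_pow_mul_pow_le_add_pow {R : Type*} [CommSemiring R] [PartialOrder R]
    [IsOrderedRing R] {x y : R} (hx : 0 ≤ x) (hy : 0 ≤ y) (m n : ℕ) :
    (m + n).choose m * x ^ m * y ^ n ≤ (x + y) ^ (m + n) := by
  rw [add_pow]
  convert Finset.single_le_sum (f := fun k ↦ x ^ k * y ^ (m + n - k) * (m + n).choose k)
    (fun k _ ↦ by positivity) (Finset.mem_range.2 (by omega : m < m + n + 1)) using 1
  simp only [Nat.add_sub_cancel_left]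
  ring

theorem one_le_add_div_sqrt_sq_sub_sq {x y : ℝ} (hx : 0 < x) (hy : 0 < y) :
    1 ≤ (x + y) / √((x + y) ^ 2 - (x - y) ^ 2) := by
  rw [one_le_div (sqrt_pos.2 (by nlinarith)), sqrt_le_left (by positivity)]
  nlinarith

theorem choose_div_two_pow_le_exp {m n : ℕ} (hm : 0 < m) (hn : 0 < n) :
    ((m + n).choose m : ℝ) / 2 ^ (m + n) ≤
      exp (-((m : ℝ) - n) ^ 2 / (2 * ((m : ℝ) + n))) := by
  have hm' : (0 : ℝ) < m := by exact_mod_cast hm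
  have hn' : (0 : ℝ) < n := by exact_mod_cast hn
  set p : ℝ := 2 * m / (m + n)
  set q : ℝ := 2 * n / (m + n)
  have hp : 0 < p := by positivity
  have hq : 0 < q := by positivity
  have hpq : p + q = 2 := by simp only [p, q]; field_simp
  have hbinom := choose_mul_pow_mul_pow_le_add_pow hp.le hq.le m n
  rw [hpq] at hbinom
  have hentropy : exp (((m : ℝ) - n) ^ 2 / (2 * ((m : ℝ) + n))) ≤ p ^ m * q ^ n := by
    rw [← exp_log (by positivity : 0 < p ^ m * q ^ n), exp_le_exp, log_mul (by positivity)
      (by positivity), log_pow, log_pow]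
    exact sq_sub_div_le_mul_log_add_mul_log hm' hn'
  rw [neg_div, exp_neg, div_le_iff₀ (by positivity), ← div_eq_inv_mul,
    le_div_iff₀ (exp_pos _)]
  calc ((m + n).choose m : ℝ) * exp _ ≤ (m + n).choose m * (p ^ m * q ^ n) := by gcongr
    _ ≤ 2 ^ (m + n) := by rw [← mul_assoc]; exact hbinom

/-- For `m, n ≥ 1`, the quantity `a_{m,n} = (m+n)!/(2^{m+n} n! m!)` satisfies
`a_{m,n} ≤ c (m+n)/√((m+n)² − (m−n)²) · exp(−(m−n)²/(2(m+n)))`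
for an absolute constant `c > 0`. -/
theorem a_mn_gaussian_bound :
    ∃ c : ℝ, 0 < c ∧ ∀ m n : ℕ, 1 ≤ m → 1 ≤ n →
      ((m + n).factorial : ℝ) / (2 ^ (m + n) * n.factorial * m.factorial) ≤
        c * ((m : ℝ) + n) / Real.sqrt (((m : ℝ) + n) ^ 2 - ((m : ℝ) - n) ^ 2) *
          Real.exp (-((m : ℝ) - n) ^ 2 / (2 * ((m : ℝ) + n))) := by
  refine ⟨1, one_pos, fun m n hm hn ↦ ?_⟩
  have hprefactor := one_le_add_div_sqrt_sq_sub_sq (x := m) (y := n)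
    (by exact_mod_cast hm) (by exact_mod_cast hn)
  calc ((m + n).factorial : ℝ) / (2 ^ (m + n) * n.factorial * m.factorial)
      = ((m + n).choose m : ℝ) / 2 ^ (m + n) := by
        rw [Nat.cast_add_choose, div_div]; ring
    _ ≤ exp (-((m : ℝ) - n) ^ 2 / (2 * ((m : ℝ) + n))) := choose_div_two_pow_le_exp hm hn
    _ ≤ _ := le_mul_of_one_le_left (exp_pos _).le (by rwa [one_mul])
end

section
/- There exists a constant c > 0 such that for all nonnegative integers m, n: (m+n)!/(2^{m+n} n! m!) ≤ c/⟨m−n⟩, where ⟨a⟩ := max(1, |a|). -/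
open Real

/-!
Take `c = 1`. By unimodality of binomial coefficients, `C(m+n, n)` is at most each of the
`|m - n| + 1` coefficients `C(m+n, k)` with `k` between `n` and `m`, and these sum to at most
`2^(m+n)`. Hence `(|m - n| + 1) C(m+n, n) ≤ 2^(m+n)`, while `⟨m - n⟩ ≤ |m - n| + 1`.
-/

namespace Nat

theorem choose_le_choose_of_le_of_le_half {N r s : ℕ} (hrs : r ≤ s) (hs : s ≤ N / 2) :
    N.choose r ≤ N.choose s := by
  induction s, hrs using Nat.le_induction with
  | base => exact le_rfl
  | succ k _ ih => exact (ih (by omega)).trans (choose_le_succ_of_lt_half_left (by omega))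

theorem choose_le_choose_of_le_of_le_sub {N r k : ℕ} (hrk : r ≤ k) (hk : k ≤ N - r) :
    N.choose r ≤ N.choose k := by
  rcases le_or_gt k (N / 2) with hk_half | hk_half
  · exact choose_le_choose_of_le_of_le_half hrk hk_half
  · rw [← choose_symm (by omega : k ≤ N)]
    exact choose_le_choose_of_le_of_le_half (by omega) (by omega)

theorem sub_add_one_mul_add_choose_le_two_pow {m n : ℕ} (h : n ≤ m) :
    (m - n + 1) * (m + n).choose n ≤ 2 ^ (m + n) :=
  calc (m - n + 1) * (m + n).choose n
      = ∑ _k ∈ Finset.Icc n m, (m + n).choose n := by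
        rw [Finset.sum_const, card_Icc, smul_eq_mul, Nat.sub_add_comm h]
    _ ≤ ∑ k ∈ Finset.Icc n m, (m + n).choose k :=
        Finset.sum_le_sum fun k hk => by
          rw [Finset.mem_Icc] at hk
          exact choose_le_choose_of_le_of_le_sub hk.1 (by omega)
    _ ≤ ∑ k ∈ Finset.range (m + n + 1), (m + n).choose k :=
        Finset.sum_le_sum_of_subset fun k hk => by
          rw [Finset.mem_Icc] at hk
          rw [Finset.mem_range]
          omega
    _ = 2 ^ (m + n) := sum_range_choose _

theorem natAbs_sub_add_one_mul_add_choose_le_two_pow (m n : ℕ) :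
    (((m : ℤ) - n).natAbs + 1) * (m + n).choose n ≤ 2 ^ (m + n) := by
  rcases le_total n m with h | h
  · rw [show ((m : ℤ) - n).natAbs = m - n by omega]
    exact sub_add_one_mul_add_choose_le_two_pow h
  · rw [show ((m : ℤ) - n).natAbs = n - m by omega, ← choose_symm_add, add_comm m n]
    exact sub_add_one_mul_add_choose_le_two_pow h

end Nat

theorem jap_le_natAbs_add_one (a : ℤ) : jap a ≤ a.natAbs + 1 := by
  rw [jap, Nat.cast_natAbs, Int.cast_abs]
  exact max_le (by linarith [abs_nonneg (a : ℝ)]) (by linarith)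

/-- There is `c > 0` with `(m+n)!/(2^{m+n} n! m!) ≤ c/⟨m−n⟩` for all `m, n ∈ ℕ₀`. -/
theorem a_mn_decay_bound :
    ∃ c : ℝ, 0 < c ∧ ∀ m n : ℕ,
      ((m + n).factorial : ℝ) / (2 ^ (m + n) * n.factorial * m.factorial) ≤
        c / jap ((m : ℤ) - n) := by
  refine ⟨1, one_pos, fun m n => ?_⟩
  have hjap_pos : 0 < jap ((m : ℤ) - n) := one_pos.trans_le (le_max_left _ _)
  have hratio : ((m + n).factorial : ℝ) / (2 ^ (m + n) * n.factorial * m.factorial) =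
      ((m + n).choose n : ℝ) / 2 ^ (m + n) := by
    rw [← Nat.choose_symm_add, Nat.cast_add_choose]
    ring
  rw [hratio, div_le_div_iff₀ (by positivity) hjap_pos, one_mul, mul_comm]
  calc jap ((m : ℤ) - n) * (m + n).choose n
      ≤ ((((m : ℤ) - n).natAbs + 1 : ℕ) : ℝ) * (m + n).choose n := by
        gcongr
        exact_mod_cast jap_le_natAbs_add_one _
    _ ≤ 2 ^ (m + n) := by
        exact_mod_cast Nat.natAbs_sub_add_one_mul_add_choose_le_two_pow m n
end

section
/- Let ψ_{n,l}(r,Θ) = (−1)^n √(n!/(2^l (n+l)!)) r^l e^{iΘl} L_n^l(r²/2) e^{−r²/4}/√(2π) be the normalized Landau eigenfunctions and g(q) = e^{−q²/2}. Then for n, m ∈ ℕ₀ and l ≥ −min(n,m): |⟨ψ_{n,l}, g ψ_{m,l}⟩| = (1/2^{l+m+n+1}) (l+m+n)!/√((l+m)!(l+n)! n! m!). -/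
/-! The phases `e^{iΘl}` cancel in the angular integral, leaving `2π` times a radial integral;
for `l = -p < 0` the radial parts of `ψ_{k+p,-p}` and `ψ_{k,p}` coincide, so only `l ≥ 0`
matters.
Expanding `L_n^l(x) = ((n+l)!/n!) ∑_j C(n,j) (-x)^j/(l+j)!` and integrating
`∫ r^{2a+1} e^{-r²} dr = a!/2` turns the radial integral into a double sum of
`C(n,j) C(m,k) (-1/2)^{j+k} c(j,k)` with `c(j,k) = (l+j+k)!/((l+j)!(l+k)!)`.
By Vandermonde `c(j,k) = ∑_t C(j,t) C(k,t) t!/(l+t)!`, and the binomial transform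
`∑_j C(n,j) C(j,t) y^j = C(n,t) y^t (1+y)^{n-t}` at `y = -1/2` collapses the double sum
to `2^{-(n+m)} c(n,m)`. -/

open Real MeasureTheory Finset

/-- The associated Laguerre polynomial `L_n^l(x) = ∑_{j=0}^n ((−x)^j/j!) C(n+l, n−j)`. -/
noncomputable def laguerre (n l : ℕ) (x : ℝ) : ℝ :=
  ∑ j ∈ Finset.range (n + 1), (-x) ^ j / j.factorial * ((n + l).choose (n - j))

/-- Associated Laguerre polynomials with integer upper index, extended to
`0 ≥ l ≥ −n` by `L_n^l(x) = ((n+l)!/n!) (−x)^{|l|} L_{n+l}^{|l|}(x)`. -/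
noncomputable def laguerreZ (n : ℕ) (l : ℤ) (x : ℝ) : ℝ :=
  if 0 ≤ l then laguerre n l.toNat x
  else ((n + l).toNat.factorial : ℝ) / n.factorial * (-x) ^ l.natAbs *
    laguerre (n + l).toNat l.natAbs x

/-- The normalized Landau eigenfunction
`ψ_{n,l}(r,Θ) = (−1)^n √(n!/(2^l (n+l)!)) r^l e^{iΘl} L_n^l(r²/2) e^{−r²/4}/√(2π)`. -/
noncomputable def landauEig (n : ℕ) (l : ℤ) (r Θ : ℝ) : ℂ :=
  (-1) ^ n *
    (Real.sqrt ((n.factorial : ℝ) / ((2 : ℝ) ^ l * (n + l).toNat.factorial)) : ℝ) *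
    ((r ^ l : ℝ) : ℂ) * Complex.exp (Complex.I * Θ * l) *
    (laguerreZ n l (r ^ 2 / 2) : ℝ) * ((Real.exp (-r ^ 2 / 4) / Real.sqrt (2 * π) : ℝ) : ℂ)

open scoped Nat

theorem sum_choose_mul_choose_mul_pow {R : Type*} [CommSemiring R] (m s : ℕ) (y : R) :
    ∑ k ∈ range (m + 1), (m.choose k * k.choose s : R) * y ^ k =
      m.choose s * y ^ s * (1 + y) ^ (m - s) := by
  rcases le_or_gt s m with hs | hs
  · obtain ⟨d, rfl⟩ := Nat.exists_eq_add_of_le hs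
    have hvanish : ∀ k ∈ range s, (((s + d).choose k * k.choose s : ℕ) : R) * y ^ k = 0 := by
      intro k hk
      rw [Nat.choose_eq_zero_of_lt (mem_range.1 hk), mul_zero, Nat.cast_zero, zero_mul]
    rw [show s + d + 1 = s + (d + 1) by ring]
    push_cast at hvanish
    rw [sum_range_add, sum_eq_zero hvanish, zero_add, Nat.add_sub_cancel_left, add_comm 1 y,
      add_pow, mul_sum]
    refine sum_congr rfl fun i _ => ?_
    have := Nat.choose_mul (n := s + d) (k := s + i) (s := s) (by omega)
    rw [Nat.add_sub_cancel_left, Nat.add_sub_cancel_left] at this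
    rw [one_pow, mul_one, pow_add, ← Nat.cast_mul, this]
    push_cast
    ring
  · rw [Nat.choose_eq_zero_of_lt hs, Nat.cast_zero, zero_mul, zero_mul]
    refine sum_eq_zero fun k hk => ?_
    rw [Nat.choose_eq_zero_of_lt (by simp at hk; omega : k < s), Nat.cast_zero, mul_zero, zero_mul]

section

variable {K : Type*} [Field K] [CharZero K]

theorem sum_choose_mul_choose_mul_factorial_div (L k : ℕ) {j N : ℕ} (hj : j ≤ N) :
    ∑ t ∈ range (N + 1), (j.choose t * k.choose t * t ! / (L + t)! : K) =
      (L + j + k)! / ((L + j)! * (L + k)!) := by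
  have hvandermonde : ((L + j + k).choose j : K) =
      ∑ t ∈ range (j + 1), ((k.choose t * (L + j).choose (j - t) : ℕ) : K) := by
    rw [show L + j + k = k + (L + j) by ring, Nat.add_choose_eq,
      Nat.sum_antidiagonal_eq_sum_range_succ_mk, Nat.cast_sum]
  have hterm : ∀ t ∈ range (j + 1), (j.choose t * k.choose t * t ! / (L + t)! : K) =
      j ! / (L + j)! * ((k.choose t * (L + j).choose (j - t) : ℕ) : K) := by
    intro t ht
    have ht : t ≤ j := Nat.lt_succ_iff.1 (mem_range.1 ht)
    rw [Nat.cast_mul, Nat.cast_choose K ht, Nat.cast_choose K (by omega : j - t ≤ L + j),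
      show L + j - (j - t) = L + t by omega]
    field_simp [Nat.cast_ne_zero.2 (Nat.factorial_ne_zero _)]
  have htruncate : ∑ t ∈ range (N + 1), (j.choose t * k.choose t * t ! / (L + t)! : K) =
      ∑ t ∈ range (j + 1), (j.choose t * k.choose t * t ! / (L + t)! : K) := by
    refine (sum_subset (range_subset_range.2 (by omega)) fun t _ ht => ?_).symm
    rw [Nat.choose_eq_zero_of_lt (by simpa using ht), Nat.cast_zero, zero_mul, zero_mul, zero_div]
  rw [htruncate, sum_congr rfl hterm, ← mul_sum, ← hvandermonde,
    Nat.cast_choose K (by omega : j ≤ L + j + k), show L + j + k - j = L + k by omega]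
  field_simp [Nat.cast_ne_zero.2 (Nat.factorial_ne_zero _)]

theorem sum_choose_mul_choose_mul_neg_half_pow (L n m : ℕ) :
    ∑ j ∈ range (n + 1), ∑ k ∈ range (m + 1),
        (n.choose j * m.choose k * (-1 / 2) ^ (j + k) *
          ((L + j + k)! / ((L + j)! * (L + k)!)) : K) =
      (1 / 2) ^ (n + m) * ((L + n + m)! / ((L + n)! * (L + m)!)) := by
  set w : ℕ → K := fun t => t ! / (L + t)!
  have hexpand : ∀ j ∈ range (n + 1), ∀ k ∈ range (m + 1),
      (n.choose j * m.choose k * (-1 / 2) ^ (j + k) *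
          ((L + j + k)! / ((L + j)! * (L + k)!)) : K) =
        ∑ t ∈ range (n + 1), (n.choose j * j.choose t * (-1 / 2) ^ j) *
          (m.choose k * k.choose t * (-1 / 2) ^ k) * w t := by
    intro j hj k _
    rw [← sum_choose_mul_choose_mul_factorial_div L k (Nat.lt_succ_iff.1 (mem_range.1 hj)),
      mul_sum]
    refine sum_congr rfl fun t _ => ?_
    simp only [w]
    ring
  have htransform : ∀ N t : ℕ,
      ∑ j ∈ range (N + 1), (N.choose j * j.choose t * (-1 / 2) ^ j : K) =
        N.choose t * (-1 / 2) ^ t * (1 / 2) ^ (N - t) := by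
    intro N t
    rw [sum_choose_mul_choose_mul_pow]
    norm_num
  calc _ = ∑ t ∈ range (n + 1),
          (∑ j ∈ range (n + 1), (n.choose j * j.choose t * (-1 / 2) ^ j : K)) *
          (∑ k ∈ range (m + 1), (m.choose k * k.choose t * (-1 / 2) ^ k : K)) * w t := by
        rw [sum_congr rfl fun j hj => sum_congr rfl (hexpand j hj)]
        simp only [sum_mul, mul_sum]
        exact ((sum_congr rfl fun _ _ => sum_comm).trans sum_comm).trans
          (sum_congr rfl fun _ _ => sum_comm)
    _ = ∑ t ∈ range (n + 1), (1 / 2) ^ (n + m) * (n.choose t * m.choose t * w t) := by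
        refine sum_congr rfl fun t ht => ?_
        rw [htransform, htransform]
        rcases le_or_gt t m with htm | htm
        · have htn : t ≤ n := Nat.lt_succ_iff.1 (mem_range.1 ht)
          have hsign : ((-1 / 2 : K) ^ t) * (-1 / 2) ^ t = (1 / 2) ^ t * (1 / 2) ^ t := by
            rw [← mul_pow, ← mul_pow]
            norm_num
          rw [show n + m = t + (n - t) + (t + (m - t)) by omega, pow_add, pow_add, pow_add]
          linear_combination (n.choose t * m.choose t * w t * (1 / 2) ^ (n - t) *
            (1 / 2) ^ (m - t) : K) * hsign
        · simp [Nat.choose_eq_zero_of_lt htm]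
    _ = _ := by
        rw [← mul_sum, ← sum_choose_mul_choose_mul_factorial_div L m le_rfl]
        simp only [w, mul_div_assoc]

end

theorem laguerre_eq_sum (n L : ℕ) (x : ℝ) :
    laguerre n L x =
      (L + n)! / n ! * ∑ j ∈ range (n + 1), n.choose j * (-x) ^ j / (L + j)! := by
  rw [laguerre, mul_sum]
  refine sum_congr rfl fun j hj => ?_
  have hj : j ≤ n := Nat.lt_succ_iff.1 (mem_range.1 hj)
  rw [Nat.cast_choose ℝ hj, Nat.cast_choose ℝ (by omega : n - j ≤ n + L),
    show n + L - (n - j) = L + j by omega, add_comm n L]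
  field_simp

theorem integral_pow_mul_exp_neg_sq (a : ℕ) :
    ∫ r in Set.Ioi (0 : ℝ), r ^ (2 * a + 1) * exp (-r ^ 2) = a ! / 2 := by
  have h := integral_rpow_mul_exp_neg_rpow two_pos
    (by linarith [a.cast_nonneg (α := ℝ)] : (-1 : ℝ) < (2 * a + 1 : ℕ))
  norm_cast at h
  rw [h, show ((2 * a + 1 + 1 : ℕ) : ℝ) / 2 = a + 1 by push_cast; ring, Gamma_nat_eq_factorial]
  ring

theorem integrableOn_pow_mul_exp_neg_sq (a : ℕ) :
    IntegrableOn (fun r : ℝ => r ^ a * exp (-r ^ 2)) (Set.Ioi 0) := by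
  simpa using integrableOn_rpow_mul_exp_neg_mul_sq one_pos
    (by linarith [a.cast_nonneg (α := ℝ)] : (-1 : ℝ) < a)

theorem integral_pow_mul_laguerre_mul_laguerre (L n m : ℕ) :
    ∫ r in Set.Ioi (0 : ℝ),
        r ^ (2 * L + 1) * laguerre n L (r ^ 2 / 2) * laguerre m L (r ^ 2 / 2) * exp (-r ^ 2) =
      (L + n + m)! / (n ! * m ! * 2 ^ (n + m + 1)) := by
  set c : ℕ → ℕ → ℝ := fun j k =>
    (L + n)! / n ! * ((L + m)! / m !) * (n.choose j * m.choose k * (-1 / 2) ^ (j + k) /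
      ((L + j)! * (L + k)!))
  have hexpand : ∀ r : ℝ,
      r ^ (2 * L + 1) * laguerre n L (r ^ 2 / 2) * laguerre m L (r ^ 2 / 2) * exp (-r ^ 2) =
        ∑ j ∈ range (n + 1), ∑ k ∈ range (m + 1),
          c j k * (r ^ (2 * (L + j + k) + 1) * exp (-r ^ 2)) := by
    intro r
    simp only [laguerre_eq_sum, mul_sum, sum_mul, c]
    rw [sum_comm]
    refine sum_congr rfl fun j _ => sum_congr rfl fun k _ => ?_
    rw [show -(r ^ 2 / 2) = -1 / 2 * r ^ 2 by ring, mul_pow, mul_pow]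
    ring
  have hint : ∀ a, Integrable (fun r : ℝ => r ^ (2 * a + 1) * exp (-r ^ 2))
      (volume.restrict (Set.Ioi 0)) := fun a => integrableOn_pow_mul_exp_neg_sq _
  simp_rw [hexpand]
  rw [integral_finsetSum _ fun j _ => integrable_finsetSum _ fun k _ => (hint _).const_mul _]
  simp_rw [integral_finsetSum _ fun k _ => (hint _).const_mul _, integral_const_mul,
    integral_pow_mul_exp_neg_sq]
  have hcoeff : ∀ j k, c j k * ((L + j + k)! / 2) = (L + n)! / n ! * ((L + m)! / m !) / 2 *
      (n.choose j * m.choose k * (-1 / 2) ^ (j + k) *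
        ((L + j + k)! / ((L + j)! * (L + k)!))) := by
    intro j k
    simp only [c]
    ring
  simp_rw [hcoeff, ← mul_sum, sum_choose_mul_choose_mul_neg_half_pow, one_div_pow]
  field_simp
  ring

noncomputable def landauRadial (n : ℕ) (l : ℤ) (r : ℝ) : ℝ :=
  (-1) ^ n * √((n ! : ℝ) / (2 ^ l * (n + l).toNat !)) * r ^ l * laguerreZ n l (r ^ 2 / 2) *
    (exp (-r ^ 2 / 4) / √(2 * π))

noncomputable def radialMatrixElement (n m : ℕ) (l : ℤ) : ℝ :=
  2 * π *
    ∫ r in Set.Ioi (0 : ℝ), landauRadial n l r * exp (-r ^ 2 / 2) * landauRadial m l r * r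

theorem landauEig_eq (n : ℕ) (l : ℤ) (r Θ : ℝ) :
    landauEig n l r Θ = landauRadial n l r * Complex.exp (Complex.I * Θ * l) := by
  simp only [landauEig, landauRadial]
  push_cast
  ring

theorem conj_landauEig_mul_mul_landauEig (n m : ℕ) (l : ℤ) (c r Θ : ℝ) :
    (starRingEnd ℂ) (landauEig n l r Θ) * c * landauEig m l r Θ =
      ((landauRadial n l r * c * landauRadial m l r : ℝ) : ℂ) := by
  have hphase : (starRingEnd ℂ) (Complex.exp (Complex.I * Θ * l)) *
      Complex.exp (Complex.I * Θ * l) = 1 := by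
    rw [← Complex.exp_conj, ← Complex.exp_add, map_mul, map_mul, Complex.conj_I,
      Complex.conj_ofReal, map_intCast, ← Complex.exp_zero]
    ring_nf
  simp only [landauEig_eq, map_mul, Complex.conj_ofReal]
  push_cast
  linear_combination (landauRadial n l r * c * landauRadial m l r : ℂ) * hphase

theorem integral_integral_conj_landauEig_mul_mul_landauEig (n m : ℕ) (l : ℤ) :
    (∫ r in Set.Ioi (0 : ℝ),
        (∫ Θ in (0 : ℝ)..(2 * π),
          (starRingEnd ℂ) (landauEig n l r Θ) * ((exp (-r ^ 2 / 2) : ℝ) : ℂ) *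
            landauEig m l r Θ) * (r : ℂ)) = radialMatrixElement n m l := by
  simp_rw [conj_landauEig_mul_mul_landauEig, intervalIntegral.integral_const, sub_zero,
    Complex.real_smul, ← Complex.ofReal_mul]
  rw [integral_complex_ofReal, radialMatrixElement, ← integral_const_mul]
  congr 2 with r
  ring

theorem radialMatrixElement_natCast (n m L : ℕ) :
    radialMatrixElement n m L = (-1) ^ (n + m) * √((n ! : ℝ) / (2 ^ L * (n + L)!)) *
      √((m ! : ℝ) / (2 ^ L * (m + L)!)) * ((L + n + m)! / (n ! * m ! * 2 ^ (n + m + 1))) := by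
  have hradial : ∀ r : ℝ,
      2 * π * (landauRadial n L r * exp (-r ^ 2 / 2) * landauRadial m L r * r) =
        (-1) ^ (n + m) * √((n ! : ℝ) / (2 ^ L * (n + L)!)) *
          √((m ! : ℝ) / (2 ^ L * (m + L)!)) *
          (r ^ (2 * L + 1) * laguerre n L (r ^ 2 / 2) * laguerre m L (r ^ 2 / 2) *
            exp (-r ^ 2)) := by
    intro r
    have hgauss : exp (-r ^ 2 / 4) * exp (-r ^ 2 / 2) * exp (-r ^ 2 / 4) = exp (-r ^ 2) := by
      rw [← exp_add, ← exp_add]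
      ring_nf
    simp only [landauRadial, laguerreZ, Int.natCast_nonneg, if_true, ← Nat.cast_add,
      Int.toNat_natCast, zpow_natCast]
    rw [← hgauss]
    field_simp
    rw [sq_sqrt (by positivity)]
    ring
  rw [radialMatrixElement, ← integral_const_mul,
    integral_congr_ae (Filter.Eventually.of_forall hradial), integral_const_mul,
    integral_pow_mul_laguerre_mul_laguerre]

theorem landauRadial_add_neg (k p : ℕ) {r : ℝ} (hr : r ≠ 0) :
    landauRadial (k + p) (-p) r = landauRadial k p r := by
  simp only [landauRadial, laguerreZ, Nat.cast_nonneg, if_true, Left.nonneg_neg_iff,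
    Nat.cast_nonpos, ← Nat.cast_add, Int.toNat_natCast, zpow_neg, zpow_natCast, Int.natAbs_neg,
    Int.natAbs_natCast]
  rcases Nat.eq_zero_or_pos p with rfl | hp
  · simp
  rw [if_neg (by omega), show ((k + p : ℕ) + -(p : ℤ)).toNat = k by omega]
  have hinv :
      ((k + p)! : ℝ) / ((2 ^ p)⁻¹ * k !) = ((k ! : ℝ) / (2 ^ p * (k + p)!))⁻¹ := by
    rw [inv_div]
    field_simp
  have hs : √((k ! : ℝ) / (2 ^ p * (k + p)!)) ^ 2 = k ! / (2 ^ p * (k + p)!) :=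
    sq_sqrt (by positivity)
  have hsign : (-1 : ℝ) ^ p * (-1) ^ p = 1 := by rw [← pow_add, Even.neg_one_pow ⟨p, rfl⟩]
  have hhalf : (-(1 / 2) : ℝ) ^ p * 2 ^ p = (-1) ^ p := by rw [← mul_pow]; norm_num
  rw [hinv, sqrt_inv, show -(r ^ 2 / 2) = -(1 / 2) * r ^ 2 by ring, mul_pow, ← pow_mul,
    show (k ! : ℝ) / (k + p)! = 2 ^ p * √((k ! : ℝ) / (2 ^ p * (k + p)!)) ^ 2 by
      rw [hs]; field_simp]
  field_simp
  linear_combination (-1 : ℝ) ^ k * r ^ (2 * p) * laguerre k p (r ^ 2 / 2) *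
    ((-1) ^ p * hhalf + hsign)

theorem radialMatrixElement_add_neg (n m p : ℕ) :
    radialMatrixElement (n + p) (m + p) (-p) = radialMatrixElement n m p := by
  rw [radialMatrixElement, radialMatrixElement]
  congr 1
  refine setIntegral_congr_fun measurableSet_Ioi fun r hr => ?_
  rw [landauRadial_add_neg _ _ (ne_of_gt hr), landauRadial_add_neg _ _ (ne_of_gt hr)]

theorem abs_radialMatrixElement_natCast (n m L : ℕ) :
    |radialMatrixElement n m L| =
      (L + m + n)! / (2 ^ (L + m + n + 1) * √((L + m)! * (L + n)! * n ! * m ! : ℝ)) := by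
  rw [radialMatrixElement_natCast, abs_mul, abs_mul, abs_mul, abs_pow, abs_neg, abs_one, one_pow,
    one_mul, abs_of_nonneg (sqrt_nonneg _), abs_of_nonneg (sqrt_nonneg _),
    abs_of_nonneg (by positivity)]
  refine (sq_eq_sq₀ (by positivity) (by positivity)).1 ?_
  simp only [mul_pow, div_pow]
  rw [sq_sqrt (by positivity), sq_sqrt (by positivity), sq_sqrt (by positivity)]
  rw [add_comm n L, add_comm m L, add_right_comm L n m]
  field_simp
  ring

/-- For `n, m ∈ ℕ₀` and `l ≥ −min(n,m)`, the matrix element of the Gaussian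
`g(q) = e^{−|q|²/2}` between Landau eigenfunctions (inner product in
`L²(ℝ², r dr dΘ)`, written in polar coordinates) satisfies
`|⟨ψ_{n,l}, g ψ_{m,l}⟩| = (1/2^{l+m+n+1}) (l+m+n)!/√((l+m)!(l+n)! n! m!)`. -/
theorem gaussian_matrix_element (n m : ℕ) (l : ℤ) (hl : -(min n m : ℤ) ≤ l) :
    ‖(∫ r in Set.Ioi (0 : ℝ),
        (∫ Θ in (0 : ℝ)..(2 * π),
          (starRingEnd ℂ) (landauEig n l r Θ) *
            ((Real.exp (-r ^ 2 / 2) : ℝ) : ℂ) * landauEig m l r Θ) * (r : ℂ))‖ =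
      ((l + m + n).toNat.factorial : ℝ) / (2 ^ ((l + m + n).toNat + 1) *
        Real.sqrt (((l + m).toNat.factorial : ℝ) * (l + n).toNat.factorial *
          n.factorial * m.factorial)) := by
  rw [integral_integral_conj_landauEig_mul_mul_landauEig, Complex.norm_real, norm_eq_abs]
  rcases le_or_gt 0 l with hl0 | hl0
  · lift l to ℕ using hl0
    simp only [← Nat.cast_add, Int.toNat_natCast]
    exact abs_radialMatrixElement_natCast n m l
  · obtain ⟨p, rfl⟩ : ∃ p : ℕ, l = -p := ⟨l.natAbs, by omega⟩
    obtain ⟨n, rfl⟩ : ∃ k, n = k + p := ⟨n - p, by omega⟩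
    obtain ⟨m, rfl⟩ : ∃ k, m = k + p := ⟨m - p, by omega⟩
    rw [radialMatrixElement_add_neg, abs_radialMatrixElement_natCast,
      show (-(p : ℤ) + (m + p : ℕ) + (n + p : ℕ)).toNat = p + m + n by omega,
      show (-(p : ℤ) + (m + p : ℕ)).toNat = m by omega,
      show (-(p : ℤ) + (n + p : ℕ)).toNat = n by omega, add_comm m p, add_comm n p]
    ring_nf
end

section
/- The function q ↦ e^{ik·q} on ℝ² (for k ∈ ℝ², k possibly nonzero) cannot be written as g ∗ μ for any finite (complex) Borel measure μ on ℝ², where g(q) = e^{−|q|²/2}. -/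
/-! A convolution of the Gaussian with a finite measure vanishes at infinity (dominated
convergence, the Gaussian being bounded by `1`), whereas the plane wave has modulus `1`
everywhere. -/

open Real MeasureTheory Filter Topology

noncomputable def gaussianConv (μ : Measure (ℝ × ℝ)) (q : ℝ × ℝ) : ℝ :=
  ∫ p, Real.exp (-((q.1 - p.1) ^ 2 + (q.2 - p.2) ^ 2) / 2) ∂μ

lemma tendsto_gaussian_atTop (x y : ℝ) :
    Tendsto (fun t : ℝ => Real.exp (-((t - x) ^ 2 + y ^ 2) / 2)) atTop (𝓝 0) := by
  have hsq : Tendsto (fun t : ℝ => (t - x) ^ 2 + y ^ 2) atTop atTop :=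
    tendsto_atTop_add_const_right _ _
      ((tendsto_pow_atTop two_ne_zero).comp (tendsto_atTop_add_const_right _ _ tendsto_id))
  exact Real.tendsto_exp_atBot.comp
    ((tendsto_neg_atBot_iff.mpr hsq).atBot_div_const two_pos)

lemma tendsto_gaussianConv_atTop (μ : Measure (ℝ × ℝ)) [IsFiniteMeasure μ] (s : ℝ) :
    Tendsto (fun t : ℝ => gaussianConv μ (t, s)) atTop (𝓝 0) := by
  have hmeas : ∀ t : ℝ, AEStronglyMeasurable
      (fun p : ℝ × ℝ => Real.exp (-((t - p.1) ^ 2 + (s - p.2) ^ 2) / 2)) μ :=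
    fun t => (by fun_prop : Continuous _).aestronglyMeasurable
  have hbound : ∀ (t : ℝ) (p : ℝ × ℝ),
      ‖Real.exp (-((t - p.1) ^ 2 + (s - p.2) ^ 2) / 2)‖ ≤ 1 := fun t p => by
    rw [Real.norm_of_nonneg (Real.exp_pos _).le, Real.exp_le_one_iff]
    nlinarith [sq_nonneg (t - p.1), sq_nonneg (s - p.2)]
  simpa only [gaussianConv, integral_zero] using
    tendsto_integral_filter_of_dominated_convergence (fun _ => (1 : ℝ))
      (Eventually.of_forall hmeas) (Eventually.of_forall fun t => Eventually.of_forall (hbound t))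
      (integrable_const 1) (ae_of_all μ fun p => tendsto_gaussian_atTop p.1 (s - p.2))

theorem plane_wave_not_gaussian_convolution_general (k : ℝ × ℝ) :
    ¬ ∃ μ₁ μ₂ μ₃ μ₄ : Measure (ℝ × ℝ),
      IsFiniteMeasure μ₁ ∧ IsFiniteMeasure μ₂ ∧ IsFiniteMeasure μ₃ ∧
      IsFiniteMeasure μ₄ ∧
      ∀ q : ℝ × ℝ,
        Complex.exp (Complex.I * ((k.1 * q.1 + k.2 * q.2 : ℝ) : ℂ)) =
          (((∫ p, Real.exp (-((q.1 - p.1) ^ 2 + (q.2 - p.2) ^ 2) / 2) ∂μ₁) -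
              (∫ p, Real.exp (-((q.1 - p.1) ^ 2 + (q.2 - p.2) ^ 2) / 2) ∂μ₂) : ℝ) : ℂ) +
            Complex.I *
              (((∫ p, Real.exp (-((q.1 - p.1) ^ 2 + (q.2 - p.2) ^ 2) / 2) ∂μ₃) -
                  (∫ p, Real.exp (-((q.1 - p.1) ^ 2 + (q.2 - p.2) ^ 2) / 2) ∂μ₄) : ℝ) : ℂ) := by
  rintro ⟨μ₁, μ₂, μ₃, μ₄, _, _, _, _, h⟩
  set f : ℝ → ℂ := fun t =>
    ((gaussianConv μ₁ (t, 0) - gaussianConv μ₂ (t, 0) : ℝ) : ℂ) +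
      Complex.I * ((gaussianConv μ₃ (t, 0) - gaussianConv μ₄ (t, 0) : ℝ) : ℂ)
  have hf_norm : ∀ t, ‖f t‖ = 1 := fun t => by
    rw [show f t = _ from (h (t, 0)).symm, Complex.norm_exp_I_mul_ofReal]
  have hf_tendsto : Tendsto f atTop (𝓝 0) := by
    have hre := (tendsto_gaussianConv_atTop μ₁ 0).sub (tendsto_gaussianConv_atTop μ₂ 0)
    have him := (tendsto_gaussianConv_atTop μ₃ 0).sub (tendsto_gaussianConv_atTop μ₄ 0)
    simpa [f] using (Complex.continuous_ofReal.tendsto _ |>.comp hre).add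
      ((Complex.continuous_ofReal.tendsto _ |>.comp him).const_mul Complex.I)
  have hone : Tendsto (fun _ : ℝ => (1 : ℝ)) atTop (𝓝 0) := by
    simpa only [hf_norm, norm_zero] using hf_tendsto.norm
  exact one_ne_zero (tendsto_const_nhds_iff.mp hone)

/-- The plane wave `q ↦ e^{ik·q}` on `ℝ²` (for fixed `k ≠ 0`) is not the
convolution `g ∗ μ` of the Gaussian `g(q) = e^{−|q|²/2}` with any finite complex
Borel measure `μ`; a finite complex measure is encoded by its Jordan decomposition
`μ = (μ₁ − μ₂) + i(μ₃ − μ₄)` into four finite (nonnegative) measures. -/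
theorem plane_wave_not_gaussian_convolution (k : ℝ × ℝ) (hk : k ≠ 0) :
    ¬ ∃ μ₁ μ₂ μ₃ μ₄ : Measure (ℝ × ℝ),
      IsFiniteMeasure μ₁ ∧ IsFiniteMeasure μ₂ ∧ IsFiniteMeasure μ₃ ∧
      IsFiniteMeasure μ₄ ∧
      ∀ q : ℝ × ℝ,
        Complex.exp (Complex.I * ((k.1 * q.1 + k.2 * q.2 : ℝ) : ℂ)) =
          (((∫ p, Real.exp (-((q.1 - p.1) ^ 2 + (q.2 - p.2) ^ 2) / 2) ∂μ₁) -
              (∫ p, Real.exp (-((q.1 - p.1) ^ 2 + (q.2 - p.2) ^ 2) / 2) ∂μ₂) : ℝ) : ℂ) +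
            Complex.I *
              (((∫ p, Real.exp (-((q.1 - p.1) ^ 2 + (q.2 - p.2) ^ 2) / 2) ∂μ₃) -
                  (∫ p, Real.exp (-((q.1 - p.1) ^ 2 + (q.2 - p.2) ^ 2) / 2) ∂μ₄) : ℝ) : ℂ) :=
  plane_wave_not_gaussian_convolution_general k
end
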